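/- For every DFA with n states that admits a mortal word, the shortest mortal word has length at most n(n+1)/2. -/

import Mathlib

/-!
Greedy argument: while some states are still alive, append a shortest word killing one of them.
If `k` states are alive, such a word has length at most `n + 1 - k`: after its first letter it
passes through pairwise distinct states outside the live set before dying, since otherwise a
cycle or a suffix could be cut out. Each round kills at least one state, so the total length is
at most `n + (n - 1) + ⋯ + 1`.
-/

/-- Running a DFA with partial transition function `δ` on a word from state `q`;
`none` means undefined. -/
def dfaRun {Q σ : Type*} (δ : Q → σ → Option Q) : Q → List σ → Option Q
  | q, [] => some q
  | q, a :: w =>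
    match δ q a with
    | none => none
    | some q2 => dfaRun δ q2 w

open Finset

section

variable {Q σ : Type*} (δ : Q → σ → Option Q)

theorem dfaRun_append (q : Q) (u v : List σ) :
    dfaRun δ q (u ++ v) = (dfaRun δ q u).bind (dfaRun δ · v) := by
  induction u generalizing q with
  | nil => rfl
  | cons a u ih =>
    simp only [List.cons_append, dfaRun]
    cases δ q a with
    | none => rfl
    | some q' => exact ih q'

theorem exists_dfaRun_eq_none_length_add_card_le [Fintype Q] (A : Finset Q)
    (hA : ∃ q ∈ A, ∃ w, dfaRun δ q w = none) :
    ∃ u : List σ, (∃ q ∈ A, dfaRun δ q u = none) ∧ u.length + #A ≤ Fintype.card Q + 1 := by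
  classical
  obtain ⟨q, hq, w, hw⟩ := hA
  obtain ⟨u, ⟨q₀, hq₀, hu⟩, hmin⟩ := (measure (List.length (α := σ))).wf.has_min
    {u | ∃ q ∈ A, dfaRun δ q u = none} ⟨w, q, hq, hw⟩
  replace hmin : ∀ v : List σ, ∀ q ∈ A, dfaRun δ q v = none → u.length ≤ v.length :=
    fun v q hq hv => not_lt.mp (hmin v ⟨q, hq, hv⟩)
  -- Working in `Option Q` lets the final, undefined state be counted with the others.
  set r : ℕ → Option Q := fun i => dfaRun δ q₀ (u.take i)
  have hsplit : ∀ i j, i ≤ j → j ≤ u.length →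
      dfaRun δ q₀ (u.take i ++ u.drop j) = (r i).bind (dfaRun δ · (u.drop j)) ∧
      (r j).bind (dfaRun δ · (u.drop j)) = none := by
    intro i j _ _
    refine ⟨dfaRun_append δ q₀ _ _, ?_⟩
    rw [← dfaRun_append, List.take_append_drop, hu]
  have hout : ∀ i ∈ Icc 1 u.length, r i ∈ (A.map Function.Embedding.some)ᶜ := by
    intro i hi
    obtain ⟨hi₁, hi₂⟩ := mem_Icc.mp hi
    simp only [mem_compl, mem_map, Function.Embedding.some_apply, not_exists, not_and]
    intro a ha hra
    have := hmin (u.drop i) a ha (by simpa [← hra] using (hsplit i i le_rfl hi₂).2)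
    rw [List.length_drop] at this
    omega
  have hinj : Set.InjOn r (Icc 1 u.length) := by
    have key : ∀ i j, i < j → j ≤ u.length → r i ≠ r j := by
      intro i j hij hj hr
      have := hmin _ q₀ hq₀ (by rw [(hsplit i j hij.le hj).1, hr, (hsplit i j hij.le hj).2])
      simp only [List.length_append, List.length_take, List.length_drop] at this
      omega
    intro i hi j hj hr
    simp only [coe_Icc, Set.mem_Icc] at hi hj
    by_contra hne
    rcases Nat.lt_or_gt_of_ne hne with h | h
    · exact key i j h hj.2 hr
    · exact key j i h hi.2 hr.symm
  have hcard := card_le_card_of_injOn r hout hinj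
  rw [Nat.card_Icc, card_compl, Fintype.card_option, card_map] at hcard
  exact ⟨u, ⟨q₀, hq₀, hu⟩, by have := card_le_univ A; omega⟩

theorem exists_forall_mem_dfaRun_eq_none_length_le [Fintype Q]
    (hδ : ∀ q, ∃ w, dfaRun δ q w = none) (A : Finset Q) :
    ∃ w : List σ, (∀ q ∈ A, dfaRun δ q w = none) ∧
      w.length ≤ ∑ i ∈ range #A, (Fintype.card Q - i) := by
  classical
  induction hk : #A using Nat.strong_induction_on generalizing A with
  | _ k ih =>
    obtain rfl | ⟨q, hq⟩ := A.eq_empty_or_nonempty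
    · exact ⟨[], by simp, by simp⟩
    obtain ⟨u, ⟨q₀, hq₀, hu⟩, hlen⟩ :=
      exists_dfaRun_eq_none_length_add_card_le δ A ⟨q, hq, hδ q⟩
    set A' := (A.image (dfaRun δ · u)).eraseNone
    have hA' : #A' < k := by
      have hnone : none ∈ A.image (dfaRun δ · u) := mem_image.mpr ⟨q₀, hq₀, hu⟩
      have := card_image_le (s := A) (f := (dfaRun δ · u))
      have := card_pos.mpr ⟨q, hq⟩
      rw [card_eraseNone_of_mem hnone]
      omega
    obtain ⟨w, hw, hwlen⟩ := ih _ hA' A' rfl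
    refine ⟨u ++ w, fun p hp => ?_, ?_⟩
    · rw [dfaRun_append]
      cases hpu : dfaRun δ p u with
      | none => rfl
      | some s => exact hw s (mem_eraseNone.mpr (mem_image.mpr ⟨p, hp, hpu⟩))
    · obtain ⟨m, rfl⟩ : ∃ m, k = m + 1 := Nat.exists_eq_succ_of_ne_zero (by omega)
      have hmono : ∑ i ∈ range #A', (Fintype.card Q - i) ≤ ∑ i ∈ range m, (Fintype.card Q - i) :=
        sum_le_sum_of_subset (range_subset_range.mpr (by omega))
      have := card_le_univ A
      rw [sum_range_succ, List.length_append]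
      omega

theorem sum_range_sub_eq_triangle (n : ℕ) : ∑ i ∈ range n, (n - i) = n * (n + 1) / 2 := by
  calc ∑ i ∈ range n, (n - i) = ∑ i ∈ range n, (i + 1) := by
        rw [← sum_range_reflect]
        exact sum_congr rfl fun i hi => by have := mem_range.mp hi; omega
    _ = ∑ i ∈ range (n + 1), i := by simp [sum_range_succ']
    _ = n * (n + 1) / 2 := by rw [sum_range_id, Nat.add_sub_cancel, Nat.mul_comm]

end

/-- For every DFA with `n` states that admits a mortal word, there is a mortal
word of length at most `n (n + 1) / 2`. -/
theorem stmt15 {Q σ : Type*} [Fintype Q] (n : ℕ) (hn : Fintype.card Q = n)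
    (δ : Q → σ → Option Q) (h : ∃ w : List σ, ∀ q, dfaRun δ q w = none) :
    ∃ w : List σ, (∀ q, dfaRun δ q w = none) ∧ w.length ≤ n * (n + 1) / 2 := by
  obtain ⟨w₀, hw₀⟩ := h
  obtain ⟨w, hw, hlen⟩ := exists_forall_mem_dfaRun_eq_none_length_le δ (fun q => ⟨w₀, hw₀ q⟩) univ
  rw [card_univ, hn, sum_range_sub_eq_triangle] at hlen
  exact ⟨w, fun q => hw q (mem_univ q), hlen⟩
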